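/- In the 1-dimensional Setup, for every p ∈ (0,1) (a p fraction of agents are non-strategic and a 1−p fraction follow standard microfoundations), no locally stable points exist: for every θ ∈ [a,b], θ is neither a local minimum on [a,b] of the function θ' ↦ L_p(θ,θ') nor a point where this function is differentiable at θ' = θ with derivative zero. -/

import Mathlib

open MeasureTheory Set
/-- Best response of an agent with features `x` to the threshold classifier `1{· ≥ θ}`
under a cost function `c` with utility `γ = 1` for positive classification. -/
noncomputable def bestResponse (c : ℝ → ℝ → ℝ) (θ x : ℝ) : ℝ :=
  if θ ≤ x then x else if c x θ ≤ 1 then θ else x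

/-- Risk of the threshold `θ'` on the base (non-strategic) population. -/
noncomputable def nonStrategicRisk (β : Measure ℝ) (μ : ℝ → ℝ) (θ' : ℝ) : ℝ :=
  ∫ x, (if θ' ≤ x then 1 - μ x else μ x) ∂β

/-- Decoupled performative risk of the threshold `θ'` on the distribution induced by
deploying `θ` against agents following standard microfoundations. -/
noncomputable def smRisk (β : Measure ℝ) (μ : ℝ → ℝ) (c : ℝ → ℝ → ℝ) (θ θ' : ℝ) : ℝ :=
  ∫ x, (if θ' ≤ bestResponse c θ x then 1 - μ x else μ x) ∂β

/-- Decoupled performative risk for a mixture of a `p` fraction of non-strategic agents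
and a `1 - p` fraction of agents following standard microfoundations. -/
noncomputable def mixRisk (β : Measure ℝ) (μ : ℝ → ℝ) (c : ℝ → ℝ → ℝ) (p θ θ' : ℝ) : ℝ :=
  p * nonStrategicRisk β μ θ' + (1 - p) * smRisk β μ c θ θ'

/-- `θ` is locally (performatively) stable: it is a local minimum on `[a,b]` of the
decoupled performative risk `θ' ↦ L_p(θ, θ')`, or that map is differentiable at `θ`
with derivative `0`. -/
def LocallyStable (β : Measure ℝ) (μ : ℝ → ℝ) (c : ℝ → ℝ → ℝ) (a b p θ : ℝ) : Prop :=
  IsLocalMinOn (fun θ' => mixRisk β μ c p θ θ') (Icc a b) θ ∨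
    HasDerivAt (fun θ' => mixRisk β μ c p θ θ') 0 θ

/-- The set of agents who game to the threshold `θ`. -/
def Qset (c : ℝ → ℝ → ℝ) (a b θ : ℝ) : Set ℝ := {x | x ∈ Icc a b ∧ x < θ ∧ c x θ ≤ 1}

/-- Average of `μ` over the gaming set `Q(θ)`. -/
noncomputable def Gam (β : Measure ℝ) (μ : ℝ → ℝ) (c : ℝ → ℝ → ℝ) (a b θ : ℝ) : ℝ :=
  (∫ x in Qset c a b θ, μ x ∂β) / (β (Qset c a b θ)).toReal

/-!
Write `D = 1 - 2μ`: moving the threshold across an interval changes the non-strategic risk by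
`±∫ D dβ` over that interval, and `D < 0` below `θSL`, `D > 0` above it. For `θ < θSL`, raising
the threshold slightly lowers both risks at a linear rate; the strategic part moreover loses the
gamers `Q(θ)`, whose positive classification was wrong on average (`∫_Q D dβ ≥ 0`). At `θ = θSL`
the linear rate vanishes, but raising the threshold drops all gamers at once: a jump of
`(1 - p) ∫_Q D dβ > 0`, since `Q(θSL)` contains an interval below `θSL` (`c θ θ = 0`). For
`θ > θSL`, lowering the threshold slightly leaves the strategic risk unchanged (the agents just
below `θ` game to `θ` anyway) and lowers the non-strategic risk at a linear rate. A one-sided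
linear decrease rules out both a local minimum and a vanishing derivative.
-/

open Filter Topology

section OneSidedDecrease

variable {f : ℝ → ℝ} {s : Set ℝ} {θ K : ℝ}

lemma not_isLocalMinOn_of_eventually_lt {l : Filter ℝ} [l.NeBot] (hl : l ≤ 𝓝[s] θ)
    (h : ∀ᶠ x in l, f x < f θ) : ¬ IsLocalMinOn f s θ := fun hmin =>
  let ⟨_, hle, hlt⟩ := ((hmin.filter_mono hl).and h).exists
  hle.not_gt hlt

lemma not_hasDerivAt_zero_of_eventually_le_sub_right (hK : 0 < K)
    (h : ∀ᶠ x in 𝓝[>] θ, f x ≤ f θ - K * (x - θ)) : ¬ HasDerivAt f 0 θ := by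
  intro hf
  have hslope : Tendsto (slope f θ) (𝓝[>] θ) (𝓝 0) :=
    (hasDerivWithinAt_iff_tendsto_slope' (lt_irrefl θ)).mp hf.hasDerivWithinAt
  have hle : ∀ᶠ x in 𝓝[>] θ, slope f θ x ≤ -K := by
    filter_upwards [h, self_mem_nhdsWithin] with x hx hθx
    rw [slope_def_field, div_le_iff₀ (sub_pos.2 hθx)]
    linarith
  linarith [le_of_tendsto hslope hle]

lemma not_hasDerivAt_zero_of_eventually_le_sub_left (hK : 0 < K)
    (h : ∀ᶠ x in 𝓝[<] θ, f x ≤ f θ - K * (θ - x)) : ¬ HasDerivAt f 0 θ := by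
  intro hf
  have hslope : Tendsto (slope f θ) (𝓝[<] θ) (𝓝 0) :=
    (hasDerivWithinAt_iff_tendsto_slope' (s := Iio θ) (lt_irrefl θ)).mp hf.hasDerivWithinAt
  have hge : ∀ᶠ x in 𝓝[<] θ, K ≤ slope f θ x := by
    filter_upwards [h, self_mem_nhdsWithin] with x hx hxθ
    rw [slope_def_field, le_div_iff_of_neg (sub_neg.2 hxθ)]
    linarith
  linarith [ge_of_tendsto hslope hge]

lemma not_isLocalMinOn_or_hasDerivAt_zero_of_right (hs : s ∈ 𝓝[>] θ) (hK : 0 < K)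
    (h : ∀ᶠ x in 𝓝[>] θ, f x ≤ f θ - K * (x - θ)) :
    ¬ (IsLocalMinOn f s θ ∨ HasDerivAt f 0 θ) := by
  refine not_or.2 ⟨not_isLocalMinOn_of_eventually_lt (nhdsWithin_le_of_mem hs) ?_,
    not_hasDerivAt_zero_of_eventually_le_sub_right hK h⟩
  filter_upwards [h, self_mem_nhdsWithin] with x hx hθx
  linarith [mul_pos hK (sub_pos.2 hθx)]

lemma not_isLocalMinOn_or_hasDerivAt_zero_of_left (hs : s ∈ 𝓝[<] θ) (hK : 0 < K)
    (h : ∀ᶠ x in 𝓝[<] θ, f x ≤ f θ - K * (θ - x)) :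
    ¬ (IsLocalMinOn f s θ ∨ HasDerivAt f 0 θ) := by
  refine not_or.2 ⟨not_isLocalMinOn_of_eventually_lt (nhdsWithin_le_of_mem hs) ?_,
    not_hasDerivAt_zero_of_eventually_le_sub_left hK h⟩
  filter_upwards [h, self_mem_nhdsWithin] with x hx hxθ
  linarith [mul_pos hK (sub_pos.2 hxθ)]

end OneSidedDecrease

lemma integral_ite_eq_add_setIntegral {α : Type*} [MeasurableSpace α] {ν : Measure α}
    {P : α → Prop} [DecidablePred P] (hP : MeasurableSet {x | P x}) {f h : α → ℝ}
    (hf : Integrable f ν) (hh : Integrable h ν) :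
    ∫ x, (if P x then h x else f x) ∂ν = ∫ x, f x ∂ν + ∫ x in {x | P x}, (h x - f x) ∂ν := by
  have hsplit :
      (fun x => if P x then h x else f x) = fun x => f x + {x | P x}.indicator (h - f) x := by
    ext x
    by_cases hx : P x <;> simp [hx]
  rw [hsplit, integral_add hf ((hh.sub hf).indicator hP), integral_indicator hP]
  rfl

lemma mul_le_setIntegral_of_le_measureReal {α : Type*} [MeasurableSpace α] {ν : Measure α}
    [IsFiniteMeasure ν] {S : Set α} {f : α → ℝ} {ε M : ℝ} (hS : MeasurableSet S) (hε : 0 ≤ ε)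
    (hM : M ≤ ν.real S) (hf : ∀ x ∈ S, ε ≤ f x) (hfi : IntegrableOn f S ν) :
    ε * M ≤ ∫ x in S, f x ∂ν :=
  calc ε * M ≤ ν.real S * ε := by nlinarith
    _ ≤ ∫ x in S, f x ∂ν := setIntegral_ge_of_const_le hS (measure_ne_top ν S) hf hfi

section Risk

variable {β : Measure ℝ} {μ : ℝ → ℝ} {c : ℝ → ℝ → ℝ} {a b p θ θ' : ℝ}

lemma measurable_bestResponse (hc : Measurable fun x => c x θ) :
    Measurable (bestResponse c θ) :=
  Measurable.ite (measurableSet_le measurable_const measurable_id) measurable_id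
    (Measurable.ite (measurableSet_le hc measurable_const) measurable_const measurable_id)

lemma measurableSet_Qset (hc : Measurable fun x => c x θ) : MeasurableSet (Qset c a b θ) :=
  measurableSet_Icc.inter (measurableSet_Iio.inter (measurableSet_le hc measurable_const))

lemma nonStrategicRisk_eq [IsFiniteMeasure β] (hμ : Integrable μ β) (θ' : ℝ) :
    nonStrategicRisk β μ θ' = ∫ x, μ x ∂β + ∫ x in Ici θ', (1 - 2 * μ x) ∂β := by
  rw [nonStrategicRisk, integral_ite_eq_add_setIntegral (P := (θ' ≤ ·)) (h := (1 - μ ·))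
    measurableSet_Ici hμ ((integrable_const 1).sub hμ)]
  congr 2 with x
  ring

lemma smRisk_eq [IsFiniteMeasure β] (hμ : Integrable μ β) (hc : Measurable fun x => c x θ)
    (θ' : ℝ) :
    smRisk β μ c θ θ' =
      ∫ x, μ x ∂β + ∫ x in {x | θ' ≤ bestResponse c θ x}, (1 - 2 * μ x) ∂β := by
  rw [smRisk, integral_ite_eq_add_setIntegral (P := (θ' ≤ bestResponse c θ ·)) (h := (1 - μ ·))
    (measurable_bestResponse hc measurableSet_Ici) hμ ((integrable_const 1).sub hμ)]
  congr 2 with x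
  ring

lemma setOf_le_bestResponse_of_lt (h : θ < θ') : {x | θ' ≤ bestResponse c θ x} = Ici θ' := by
  ext x
  simp only [mem_ofPred_eq, mem_Ici, bestResponse]
  split_ifs with hx
  · rfl
  · exact iff_of_false (by linarith) (by linarith)
  · rfl

lemma setOf_le_bestResponse_eq_of_le (hθ' : θ' ≤ θ) (hwin : ∀ x ∈ Ico θ' θ, c x θ ≤ 1) :
    {x | θ' ≤ bestResponse c θ x} = {x | θ ≤ bestResponse c θ x} := by
  ext x
  simp only [mem_ofPred_eq, bestResponse]
  split_ifs with hx hcx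
  · exact iff_of_true (hθ'.trans hx) hx
  · exact iff_of_true hθ' le_rfl
  · exact iff_of_false (fun hθ'x => hcx (hwin x ⟨hθ'x, not_le.1 hx⟩)) hx

lemma setOf_le_bestResponse_self_ae_eq (hae : ∀ᵐ x ∂β, x ∈ Icc a b) :
    {x | θ ≤ bestResponse c θ x} =ᵐ[β] (Ici θ ∪ Qset c a b θ : Set ℝ) := by
  filter_upwards [hae] with x hx
  change (x ∈ {x | θ ≤ bestResponse c θ x}) = (x ∈ Ici θ ∪ Qset c a b θ)
  refine propext ?_
  simp only [mem_ofPred_eq, mem_union, mem_Ici, Qset, bestResponse]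
  split_ifs with h1 h2 <;> simp_all

lemma mixRisk_sub_of_lt [IsFiniteMeasure β] (hae : ∀ᵐ x ∂β, x ∈ Icc a b)
    (hμ : Integrable μ β) (hc : Measurable fun x => c x θ) (h : θ < θ') :
    mixRisk β μ c p θ θ' - mixRisk β μ c p θ θ =
      -(∫ x in Ico θ θ', (1 - 2 * μ x) ∂β) - (1 - p) * ∫ x in Qset c a b θ, (1 - 2 * μ x) ∂β := by
  have hint : Integrable (fun x => 1 - 2 * μ x) β := (integrable_const 1).sub (hμ.const_mul 2)
  have hIci : ∫ x in Ici θ, (1 - 2 * μ x) ∂β =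
      (∫ x in Ico θ θ', (1 - 2 * μ x) ∂β) + ∫ x in Ici θ', (1 - 2 * μ x) ∂β := by
    rw [← Ico_union_Ici_eq_Ici h.le, setIntegral_union
      (disjoint_left.2 fun x hx hx' => hx.2.not_ge hx') measurableSet_Ici hint.integrableOn
      hint.integrableOn]
  have hpos : ∫ x in {x | θ ≤ bestResponse c θ x}, (1 - 2 * μ x) ∂β =
      (∫ x in Ici θ, (1 - 2 * μ x) ∂β) + ∫ x in Qset c a b θ, (1 - 2 * μ x) ∂β := by
    have hdisj : Disjoint (Ici θ) (Qset c a b θ) :=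
      disjoint_left.2 fun x hx hq => hq.2.1.not_ge hx
    rw [setIntegral_congr_set (setOf_le_bestResponse_self_ae_eq hae),
      setIntegral_union hdisj (measurableSet_Qset hc) hint.integrableOn hint.integrableOn]
  simp only [mixRisk, nonStrategicRisk_eq hμ, smRisk_eq hμ hc, setOf_le_bestResponse_of_lt h,
    hpos, hIci]
  ring

lemma mixRisk_sub_of_le [IsFiniteMeasure β] (hμ : Integrable μ β)
    (hc : Measurable fun x => c x θ) (hθ' : θ' ≤ θ) (hwin : ∀ x ∈ Ico θ' θ, c x θ ≤ 1) :
    mixRisk β μ c p θ θ - mixRisk β μ c p θ θ' = p * ∫ x in Ico θ' θ, (2 * μ x - 1) ∂β := by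
  have hint : Integrable (fun x => 1 - 2 * μ x) β := (integrable_const 1).sub (hμ.const_mul 2)
  have hIci : ∫ x in Ici θ', (1 - 2 * μ x) ∂β =
      -(∫ x in Ico θ' θ, (2 * μ x - 1) ∂β) + ∫ x in Ici θ, (1 - 2 * μ x) ∂β := by
    rw [← Ico_union_Ici_eq_Ici hθ', setIntegral_union
      (disjoint_left.2 fun x hx hx' => hx.2.not_ge hx') measurableSet_Ici hint.integrableOn
      hint.integrableOn, ← integral_neg]
    congr 2 with x
    ring
  simp only [mixRisk, nonStrategicRisk_eq hμ, smRisk_eq hμ hc,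
    setOf_le_bestResponse_eq_of_le hθ' hwin, hIci]
  ring

end Risk

section Density

variable {g : ℝ → ℝ} {a b s t : ℝ}

lemma withDensity_Ico_eq (hs : a ≤ s) (ht : t ≤ b) :
    (volume.restrict (Icc a b)).withDensity (fun x => ENNReal.ofReal (g x)) (Ico s t) =
      ∫⁻ x in Ico s t, ENNReal.ofReal (g x) := by
  rw [withDensity_apply _ measurableSet_Ico, Measure.restrict_restrict measurableSet_Ico,
    inter_eq_left.2 (Ico_subset_Icc_self.trans (Icc_subset_Icc hs ht))]

lemma ofReal_mul_le_withDensity_Ico {m : ℝ} (hm : 0 ≤ m) (hs : a ≤ s) (ht : t ≤ b)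
    (hmg : ∀ x ∈ Ico s t, m ≤ g x) :
    ENNReal.ofReal (m * (t - s)) ≤
      (volume.restrict (Icc a b)).withDensity (fun x => ENNReal.ofReal (g x)) (Ico s t) := by
  rw [withDensity_Ico_eq hs ht, ENNReal.ofReal_mul hm, ← Real.volume_Ico, ← setLIntegral_const]
  exact setLIntegral_mono' measurableSet_Ico fun x hx => ENNReal.ofReal_le_ofReal (hmg x hx)

lemma withDensity_Ico_le_ofReal_mul {G : ℝ} (hG : 0 ≤ G) (hs : a ≤ s) (ht : t ≤ b)
    (hgG : ∀ x ∈ Ico s t, g x ≤ G) :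
    (volume.restrict (Icc a b)).withDensity (fun x => ENNReal.ofReal (g x)) (Ico s t) ≤
      ENNReal.ofReal (G * (t - s)) := by
  rw [withDensity_Ico_eq hs ht, ENNReal.ofReal_mul hG, ← Real.volume_Ico, ← setLIntegral_const]
  exact setLIntegral_mono' measurableSet_Ico fun x hx => ENNReal.ofReal_le_ofReal (hgG x hx)

lemma exists_measureReal_Ico_bounds {β : Measure ℝ} [IsFiniteMeasure β]
    (hβ : β = (volume.restrict (Icc a b)).withDensity fun x => ENNReal.ofReal (g x))
    (hg : ContinuousOn g (Icc a b)) (hg_pos : ∀ x ∈ Icc a b, 0 < g x) (hab : a ≤ b) :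
    ∃ m G, 0 < m ∧ 0 ≤ G ∧
      (∀ s t, a ≤ s → t ≤ b → m * (t - s) ≤ β.real (Ico s t)) ∧
      (∀ s t, a ≤ s → s ≤ t → t ≤ b → β.real (Ico s t) ≤ G * (t - s)) := by
  obtain ⟨x₀, hx₀, hmin⟩ := isCompact_Icc.exists_isMinOn (nonempty_Icc.2 hab) hg
  obtain ⟨x₁, hx₁, hmax⟩ := isCompact_Icc.exists_isMaxOn (nonempty_Icc.2 hab) hg
  have hsub {s t} (hs : a ≤ s) (ht : t ≤ b) : Ico s t ⊆ Icc a b :=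
    Ico_subset_Icc_self.trans (Icc_subset_Icc hs ht)
  refine ⟨g x₀, g x₁, hg_pos x₀ hx₀, (hg_pos x₁ hx₁).le, fun s t hs ht => ?_,
    fun s t hs hst ht => ?_⟩ <;> rw [measureReal_def]
  · rw [← ENNReal.ofReal_le_iff_le_toReal (measure_ne_top β _), hβ]
    exact ofReal_mul_le_withDensity_Ico (hg_pos x₀ hx₀).le hs ht
      fun x hx => hmin (hsub hs ht hx)
  · refine ENNReal.toReal_le_of_le_ofReal (mul_nonneg (hg_pos x₁ hx₁).le (sub_nonneg.2 hst)) ?_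
    rw [hβ]
    exact withDensity_Ico_le_ofReal_mul (hg_pos x₁ hx₁).le hs ht
      fun x hx => hmax (hsub hs ht hx)

end Density

lemma exists_Ico_cost_le_one {c : ℝ → ℝ → ℝ} {θ u : ℝ} (hc : ContinuousAt (fun x => c x θ) θ)
    (hc0 : c θ θ = 0) (hu : u < θ) : ∃ t ∈ Ioo u θ, ∀ x ∈ Ico t θ, c x θ ≤ 1 := by
  have hnear : ∀ᶠ x in 𝓝[<] θ, x ∈ Ioo u θ ∧ c x θ ≤ 1 :=
    Eventually.and (Ioo_mem_nhdsLT hu)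
      (nhdsWithin_le_nhds (hc.eventually (eventually_le_nhds (by simp [hc0]))))
  obtain ⟨t, htθ, hsub⟩ := mem_nhdsLT_iff_exists_Ico_subset.1 hnear
  exact ⟨t, ⟨(hsub ⟨le_rfl, htθ⟩).1.1, htθ⟩, fun x hx => (hsub hx).2⟩

section Stability

variable {β : Measure ℝ} [IsFiniteMeasure β] {μ : ℝ → ℝ} {c : ℝ → ℝ → ℝ}
  {a b p θ θSL m G : ℝ}

lemma one_sub_two_mul_nonneg_of_mem_Qset (hμ_mono : StrictMonoOn μ (Icc a b))
    (hSL : θSL ∈ Icc a b) (hhalf : μ θSL = 1 / 2) (hθ : θ ≤ θSL) :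
    ∀ x ∈ Qset c a b θ, 0 ≤ 1 - 2 * μ x := fun x hx => by
  linarith [hμ_mono hx.1 hSL (hx.2.1.trans_le hθ)]

lemma setIntegral_Qset_pos (hμ : Integrable μ β) (hμ_mono : StrictMonoOn μ (Icc a b))
    (hSL : θSL ∈ Ioo a b) (hhalf : μ θSL = 1 / 2) (hc : Continuous fun x => c x θSL)
    (hc0 : c θSL θSL = 0) (hm : 0 < m)
    (hlow : ∀ s t, a ≤ s → t ≤ b → m * (t - s) ≤ β.real (Ico s t)) :
    0 < ∫ x in Qset c a b θSL, (1 - 2 * μ x) ∂β := by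
  have hint : Integrable (fun x => 1 - 2 * μ x) β := (integrable_const 1).sub (hμ.const_mul 2)
  have hSL' : θSL ∈ Icc a b := Ioo_subset_Icc_self hSL
  obtain ⟨t, ⟨hat, htθ⟩, hwin⟩ := exists_Ico_cost_le_one hc.continuousAt hc0 hSL.1
  set t' := (t + θSL) / 2 with ht'_def
  have ht' : t' ∈ Icc a b := ⟨by linarith, by linarith [hSL.2]⟩
  set ε := 1 - 2 * μ t' with hε_def
  have hε : 0 < ε := by linarith [hμ_mono ht' hSL' (by linarith : t' < θSL)]
  have hsub : Ico t t' ⊆ Qset c a b θSL := fun x hx =>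
    ⟨⟨by linarith [hx.1], by linarith [hx.2, hSL.2]⟩, by linarith [hx.2],
      hwin x ⟨hx.1, by linarith [hx.2]⟩⟩
  calc 0 < ε * (m * (t' - t)) := mul_pos hε (mul_pos hm (by linarith))
    _ ≤ ∫ x in Ico t t', (1 - 2 * μ x) ∂β := by
      refine mul_le_setIntegral_of_le_measureReal measurableSet_Ico hε.le
        (hlow t t' hat.le ht'.2) (fun y hy => ?_) hint.integrableOn
      have hyI : y ∈ Icc a b := ⟨by linarith [hy.1], by linarith [hy.2, ht'.2]⟩
      linarith [hμ_mono.monotoneOn hyI ht' hy.2.le]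
    _ ≤ ∫ x in Qset c a b θSL, (1 - 2 * μ x) ∂β :=
      setIntegral_mono_set hint.integrableOn
        (ae_restrict_of_forall_mem (measurableSet_Qset hc.measurable)
          (one_sub_two_mul_nonneg_of_mem_Qset hμ_mono hSL' hhalf le_rfl))
        hsub.eventuallyLE

lemma not_locallyStable_of_lt (hae : ∀ᵐ x ∂β, x ∈ Icc a b) (hμ : Integrable μ β)
    (hμ_mono : StrictMonoOn μ (Icc a b)) (hSL : θSL ∈ Icc a b) (hhalf : μ θSL = 1 / 2)
    (hc : Measurable fun x => c x θ) (hp : p ≤ 1) (hm : 0 < m)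
    (hlow : ∀ s t, a ≤ s → t ≤ b → m * (t - s) ≤ β.real (Ico s t))
    (hθa : a ≤ θ) (hθ : θ < θSL) : ¬ LocallyStable β μ c a b p θ := by
  set t := (θ + θSL) / 2 with ht_def
  have ht : t ∈ Icc a b := ⟨by linarith, by linarith [hSL.2]⟩
  set ε := 1 - 2 * μ t with hε_def
  have hε : 0 < ε := by linarith [hμ_mono ht hSL (by linarith : t < θSL)]
  have hQ : 0 ≤ ∫ x in Qset c a b θ, (1 - 2 * μ x) ∂β :=
    setIntegral_nonneg (measurableSet_Qset hc)
      (one_sub_two_mul_nonneg_of_mem_Qset hμ_mono hSL hhalf hθ.le)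
  refine not_isLocalMinOn_or_hasDerivAt_zero_of_right
    (Icc_mem_nhdsGT_of_mem ⟨hθa, by linarith [hSL.2]⟩) (mul_pos hε hm)
    (eventually_of_mem (Ioc_mem_nhdsGT (by linarith : θ < t)) fun x hx => ?_)
  have hI : ε * (m * (x - θ)) ≤ ∫ y in Ico θ x, (1 - 2 * μ y) ∂β := by
    refine mul_le_setIntegral_of_le_measureReal measurableSet_Ico hε.le
      (hlow θ x hθa (by linarith [hx.2, ht.2])) (fun y hy => ?_)
      ((integrable_const 1).sub (hμ.const_mul 2)).integrableOn
    have hyI : y ∈ Icc a b := ⟨hθa.trans hy.1, by linarith [hy.2, hx.2, ht.2]⟩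
    linarith [hμ_mono.monotoneOn hyI ht (by linarith [hy.2, hx.2] : y ≤ t)]
  have hdiff := mixRisk_sub_of_lt (p := p) hae hμ hc hx.1
  nlinarith

lemma not_locallyStable_of_eq (hae : ∀ᵐ x ∂β, x ∈ Icc a b) (hμ : Integrable μ β)
    (hμ_mono : StrictMonoOn μ (Icc a b)) (hμ_le : ∀ x ∈ Icc a b, μ x ≤ 1)
    (hSL : θSL ∈ Ioo a b) (hhalf : μ θSL = 1 / 2)
    (hc : Continuous fun x => c x θSL) (hc0 : c θSL θSL = 0) (hp : p < 1) (hm : 0 < m)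
    (hG : 0 ≤ G) (hlow : ∀ s t, a ≤ s → t ≤ b → m * (t - s) ≤ β.real (Ico s t))
    (hup : ∀ s t, a ≤ s → s ≤ t → t ≤ b → β.real (Ico s t) ≤ G * (t - s)) :
    ¬ LocallyStable β μ c a b p θSL := by
  set N := ∫ x in Qset c a b θSL, (1 - 2 * μ x) ∂β
  have hN : 0 < N := setIntegral_Qset_pos hμ hμ_mono hSL hhalf hc hc0 hm hlow
  set r := min b (θSL + (1 - p) * N / (G + 1))
  have hr : θSL < r :=
    lt_min hSL.2 (lt_add_of_pos_right _ (div_pos (mul_pos (by linarith) hN) (by linarith)))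
  refine not_isLocalMinOn_or_hasDerivAt_zero_of_right
    (Icc_mem_nhdsGT_of_mem ⟨hSL.1.le, hSL.2⟩) one_pos
    (eventually_of_mem (Ioc_mem_nhdsGT hr) fun x hx => ?_)
  have hxb : x ≤ b := hx.2.trans (min_le_left _ _)
  have hI : β.real (Ico θSL x) • (-1 : ℝ) ≤ ∫ y in Ico θSL x, (1 - 2 * μ y) ∂β :=
    setIntegral_ge_of_const_le measurableSet_Ico (measure_ne_top β _)
      (fun y hy => by linarith [hμ_le y ⟨hSL.1.le.trans hy.1, by linarith [hy.2]⟩])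
      ((integrable_const 1).sub (hμ.const_mul 2)).integrableOn
  have hjump : (G + 1) * (x - θSL) ≤ (1 - p) * N := by
    rw [← le_div_iff₀' (by linarith)]
    linarith [hx.2.trans (min_le_right _ _)]
  have hβx := hup θSL x hSL.1.le hx.1.le hxb
  have hdiff := mixRisk_sub_of_lt (p := p) hae hμ hc.measurable hx.1
  rw [smul_eq_mul] at hI
  nlinarith

lemma not_locallyStable_of_gt (hμ : Integrable μ β)
    (hμ_mono : StrictMonoOn μ (Icc a b)) (hSL : θSL ∈ Icc a b) (hhalf : μ θSL = 1 / 2)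
    (hc : Continuous fun x => c x θ) (hc0 : c θ θ = 0) (hp : 0 < p) (hm : 0 < m)
    (hlow : ∀ s t, a ≤ s → t ≤ b → m * (t - s) ≤ β.real (Ico s t))
    (hθ : θSL < θ) (hθb : θ ≤ b) : ¬ LocallyStable β μ c a b p θ := by
  obtain ⟨t, ⟨hSLt, htθ⟩, hwin⟩ := exists_Ico_cost_le_one hc.continuousAt hc0 hθ
  have ht : t ∈ Icc a b := ⟨by linarith [hSL.1], by linarith⟩
  set ε := 2 * μ t - 1 with hε_def
  have hε : 0 < ε := by linarith [hμ_mono hSL ht hSLt]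
  refine not_isLocalMinOn_or_hasDerivAt_zero_of_left
    (Icc_mem_nhdsLT_of_mem ⟨by linarith [hSL.1], hθb⟩) (mul_pos hp (mul_pos hε hm))
    (eventually_of_mem (Ico_mem_nhdsLT htθ) fun x hx => ?_)
  have hI : ε * (m * (θ - x)) ≤ ∫ y in Ico x θ, (2 * μ y - 1) ∂β := by
    refine mul_le_setIntegral_of_le_measureReal measurableSet_Ico hε.le
      (hlow x θ (by linarith [hx.1, ht.1]) hθb) (fun y hy => ?_)
      ((hμ.const_mul 2).sub (integrable_const 1)).integrableOn
    have hyI : y ∈ Icc a b := ⟨by linarith [hy.1, hx.1, ht.1], by linarith [hy.2]⟩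
    linarith [hμ_mono.monotoneOn ht hyI (hx.1.trans hy.1)]
  have hdiff := mixRisk_sub_of_le (p := p) hμ hc.measurable hx.2.le
    fun y hy => hwin y ⟨hx.1.trans hy.1, hy.2⟩
  nlinarith

end Stability

theorem stmt4_general
    (a b : ℝ)
    (c : ℝ → ℝ → ℝ) (hc_cont : Continuous fun p : ℝ × ℝ => c p.1 p.2)
    (hc_zero : ∀ x, c x x = 0)
    (g : ℝ → ℝ) (hg_cont : ContinuousOn g (Icc a b)) (hg_pos : ∀ x ∈ Icc a b, 0 < g x)
    (β : Measure ℝ)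
    (hβ : β = (volume.restrict (Icc a b)).withDensity fun x => ENNReal.ofReal (g x))
    (hβprob : IsProbabilityMeasure β)
    (μ : ℝ → ℝ) (hμ_cont : ContinuousOn μ (Icc a b)) (hμ_mono : StrictMonoOn μ (Icc a b))
    (hμ_range : ∀ x ∈ Icc a b, μ x ∈ Icc (0:ℝ) 1)
    (θSL : ℝ) (hθSL : θSL ∈ Ioo a b) (hhalf : μ θSL = 1/2) :
    ∀ p ∈ Ioo (0:ℝ) 1, ∀ θ ∈ Icc a b, ¬ LocallyStable β μ c a b p θ := by
  intro p hp θ hθ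
  have hae : ∀ᵐ x ∂β, x ∈ Icc a b :=
    hβ ▸ (withDensity_absolutelyContinuous _ _).ae_le (ae_restrict_mem measurableSet_Icc)
  have hμ : Integrable μ β := by
    rw [← Measure.restrict_eq_self_of_ae_mem hae]
    exact hμ_cont.integrableOn_Icc
  obtain ⟨m, G, hm, hG, hlow, hup⟩ :=
    exists_measureReal_Ico_bounds hβ hg_cont hg_pos (hθ.1.trans hθ.2)
  have hc : Continuous fun x => c x θ := hc_cont.comp (continuous_id.prodMk continuous_const)
  have hSL : θSL ∈ Icc a b := Ioo_subset_Icc_self hθSL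
  rcases lt_trichotomy θ θSL with hlt | rfl | hgt
  · exact not_locallyStable_of_lt hae hμ hμ_mono hSL hhalf hc.measurable hp.2.le hm hlow hθ.1 hlt
  · exact not_locallyStable_of_eq hae hμ hμ_mono (fun x hx => (hμ_range x hx).2) hθSL hhalf hc
      (hc_zero θ) hp.2 hm hG hlow hup
  · exact not_locallyStable_of_gt hμ hμ_mono hSL hhalf hc (hc_zero θ) hp.1 hm hlow hgt hθ.2

/-- Proposition 2(b): for any p ∈ (0,1), no locally stable points exist. -/
theorem stmt4
    (a b : ℝ) (hab : a < b)
    (c : ℝ → ℝ → ℝ) (hc_cont : Continuous fun p : ℝ × ℝ => c p.1 p.2)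
    (hc_zero : ∀ x, c x x = 0)
    (hc_between : ∀ x xP z : ℝ, min x xP < z → z < max x xP →
      c x z < c x xP ∧ c z x < c xP x)
    (g : ℝ → ℝ) (hg_cont : ContinuousOn g (Icc a b)) (hg_pos : ∀ x ∈ Icc a b, 0 < g x)
    (β : Measure ℝ)
    (hβ : β = (volume.restrict (Icc a b)).withDensity fun x => ENNReal.ofReal (g x))
    (hβprob : IsProbabilityMeasure β)
    (μ : ℝ → ℝ) (hμ_cont : ContinuousOn μ (Icc a b)) (hμ_mono : StrictMonoOn μ (Icc a b))
    (hμ_range : ∀ x ∈ Icc a b, μ x ∈ Icc (0:ℝ) 1)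
    (θSL : ℝ) (hθSL : θSL ∈ Ioo a b) (hhalf : μ θSL = 1/2) :
    ∀ p ∈ Ioo (0:ℝ) 1, ∀ θ ∈ Icc a b, ¬ LocallyStable β μ c a b p θ :=
  stmt4_general a b c hc_cont hc_zero g hg_cont hg_pos β hβ hβprob μ hμ_cont hμ_mono hμ_range θSL
    hθSL hhalf
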